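/- Let K be a field of characteristic different from 2 and let a, c, d ∈ K with a ≠ 0. If 4ad = 5c², then g^7_{a0cd} is isomorphic to g^7_{1000}. If 4ad ≠ 5c² and 4ad − 5c² is a square in K, then g^7_{a0cd} is isomorphic to g^7_{1001}. -/

import Mathlib

variable (K : Type*) [Field K]

/-- The bracket of the Lie algebra `g^7_{abcd}` on `K^7` (indices `0..6` correspond to
`e_1..e_7`): the only nonzero brackets among basis vectors are `⁅e_1, e_{i+1}⁆ = e_i` for
`2 ≤ i ≤ 6`, `⁅e_4, e_7⁆ = a e_2`, `⁅e_5, e_6⁆ = b e_2`, `⁅e_5, e_7⁆ = c e_2 + (a+b) e_3`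
and `⁅e_6, e_7⁆ = d e_2 + c e_3 + (a+b) e_4`. -/
def g7b (a b c d : K) (x y : Fin 7 → K) : Fin 7 → K :=
  ![0,
    x 0 * y 2 - x 2 * y 0 + a * (x 3 * y 6 - x 6 * y 3) + b * (x 4 * y 5 - x 5 * y 4)
      + c * (x 4 * y 6 - x 6 * y 4) + d * (x 5 * y 6 - x 6 * y 5),
    x 0 * y 3 - x 3 * y 0 + (a + b) * (x 4 * y 6 - x 6 * y 4) + c * (x 5 * y 6 - x 6 * y 5),
    x 0 * y 4 - x 4 * y 0 + (a + b) * (x 5 * y 6 - x 6 * y 5),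
    x 0 * y 5 - x 5 * y 0,
    x 0 * y 6 - x 6 * y 0,
    0]

/-- The Lie algebras `g^7_{abcd}` and `g^7_{ABCD}` are isomorphic: there is a bijective
linear map preserving the brackets. -/
def g7Iso (a b c d A B C D : K) : Prop :=
  ∃ f : (Fin 7 → K) ≃ₗ[K] (Fin 7 → K),
    ∀ x y, f (g7b K a b c d x y) = g7b K A B C D (f x) (f y)

/-!
Two changes of basis suffice. Replacing `e₁` by `e₁ + t e₇` (and correcting `e₃, e₄, e₅`)
turns `g^7_{a0cd}` into `g^7_{a0c'd'}` with `c' = c - 2ta²`, `d' = d - 5tac + 5a³t²`; the choice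
`t = c / (2a²)` gives `c' = 0` and `d' = (4ad - 5c²) / (4a)`. Rescaling `e₁ ↦ α e₁`, `e₇ ↦ β e₇`
multiplies `a, b, c, d` by `α² / β, α² / β, α³ / β, α⁴ / β`. With `β = aα²` this makes the
first parameter `1` and the last `d'α² / a`, which is `0` if `d' = 0` and `1` for
`α = 2a / w` when `4ad - 5c² = w²`.
-/

section

variable {K}

theorem g7Iso.trans {a b c d a' b' c' d' A B C D : K}
    (h₁ : g7Iso K a b c d a' b' c' d') (h₂ : g7Iso K a' b' c' d' A B C D) :
    g7Iso K a b c d A B C D := by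
  obtain ⟨f, hf⟩ := h₁
  obtain ⟨g, hg⟩ := h₂
  exact ⟨f.trans g, fun x y => by simp only [LinearEquiv.trans_apply, hf, hg]⟩

/-- The change of basis `e₁ ↦ e₁ + t e₇`, corrected on `e₃, e₄, e₅` by terms involving the
parameters `c'`, `d'` of the target algebra. -/
def shiftMap (a c' d' t : K) : (Fin 7 → K) →ₗ[K] (Fin 7 → K) where
  toFun x := ![x 0,
    x 1 - 3 * t * a * x 2 + (t ^ 2 * a ^ 2 - 2 * t * c') * x 3 - t * d' * x 4,
    x 2 - 2 * t * a * x 3 - t * c' * x 4,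
    x 3 - t * a * x 4,
    x 4, x 5, x 6 + t * x 0]
  map_add' x y := by
    funext i; fin_cases i <;> simp only [Pi.add_apply, Fin.reduceFinMk, Matrix.cons_val] <;> ring
  map_smul' m x := by
    funext i; fin_cases i <;>
      simp only [Pi.smul_apply, smul_eq_mul, RingHom.id_apply, Fin.reduceFinMk, Matrix.cons_val] <;>
      ring

section Shift

variable {a c d c' d' : K} (t : K)
  (hc : c' = c - 2 * t * a ^ 2) (hd : d' = d - 5 * t * a * c + 5 * a ^ 3 * t ^ 2)
include hc hd

theorem shiftMap_neg_shiftMap (x : Fin 7 → K) :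
    shiftMap a c d (-t) (shiftMap a c' d' t x) = x := by
  subst hc hd; funext i; fin_cases i <;>
    simp only [shiftMap, LinearMap.coe_mk, AddHom.coe_mk, Fin.reduceFinMk, Matrix.cons_val] <;> ring

theorem shiftMap_shiftMap_neg (x : Fin 7 → K) :
    shiftMap a c' d' t (shiftMap a c d (-t) x) = x := by
  subst hc hd; funext i; fin_cases i <;>
    simp only [shiftMap, LinearMap.coe_mk, AddHom.coe_mk, Fin.reduceFinMk, Matrix.cons_val] <;> ring

theorem shiftMap_bracket (x y : Fin 7 → K) :
    shiftMap a c' d' t (g7b K a 0 c d x y) =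
      g7b K a 0 c' d' (shiftMap a c' d' t x) (shiftMap a c' d' t y) := by
  subst hc hd; funext i; fin_cases i <;>
    simp only [shiftMap, g7b, LinearMap.coe_mk, AddHom.coe_mk, Fin.reduceFinMk, Matrix.cons_val] <;>
    ring

theorem g7Iso_shift : g7Iso K a 0 c d a 0 c' d' :=
  ⟨.ofLinearMap _ _ (LinearMap.ext (shiftMap_shiftMap_neg t hc hd))
    (LinearMap.ext (shiftMap_neg_shiftMap t hc hd)), shiftMap_bracket t hc hd⟩

end Shift

def scaleMap (α β : K) : (Fin 7 → K) →ₗ[K] (Fin 7 → K) where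
  toFun x := ![α * x 0, α ^ 5 * β * x 1, α ^ 4 * β * x 2, α ^ 3 * β * x 3, α ^ 2 * β * x 4,
    α * β * x 5, β * x 6]
  map_add' x y := by
    funext i; fin_cases i <;> simp only [Pi.add_apply, Fin.reduceFinMk, Matrix.cons_val] <;> ring
  map_smul' m x := by
    funext i; fin_cases i <;>
      simp only [Pi.smul_apply, smul_eq_mul, RingHom.id_apply, Fin.reduceFinMk, Matrix.cons_val] <;>
      ring

theorem scaleMap_inv_scaleMap {α β : K} (hα : α ≠ 0) (hβ : β ≠ 0) (x : Fin 7 → K) :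
    scaleMap α⁻¹ β⁻¹ (scaleMap α β x) = x := by
  funext i; fin_cases i <;>
    simp only [scaleMap, LinearMap.coe_mk, AddHom.coe_mk, Fin.reduceFinMk, Matrix.cons_val] <;>
    field_simp

theorem scaleMap_bracket {a b c d A B C D α β : K} (hA : A * β = a * α ^ 2)
    (hB : B * β = b * α ^ 2) (hC : C * β = c * α ^ 3) (hD : D * β = d * α ^ 4)
    (x y : Fin 7 → K) :
    scaleMap α β (g7b K a b c d x y) = g7b K A B C D (scaleMap α β x) (scaleMap α β y) := by
  funext i; fin_cases i <;>
    simp only [scaleMap, g7b, LinearMap.coe_mk, AddHom.coe_mk, Fin.reduceFinMk, Matrix.cons_val]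
  · ring
  · linear_combination
      -α ^ 3 * β * ((x 3 * y 6 - x 6 * y 3) * hA + (x 4 * y 5 - x 5 * y 4) * hB)
      - α ^ 2 * β * (x 4 * y 6 - x 6 * y 4) * hC - α * β * (x 5 * y 6 - x 6 * y 5) * hD
  · linear_combination -α ^ 2 * β * (x 4 * y 6 - x 6 * y 4) * (hA + hB)
      - α * β * (x 5 * y 6 - x 6 * y 5) * hC
  · linear_combination -α * β * (x 5 * y 6 - x 6 * y 5) * (hA + hB)
  · ring
  · ring
  · ring

theorem g7Iso_scale {a b c d A B C D α β : K} (hα : α ≠ 0) (hβ : β ≠ 0)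
    (hA : A * β = a * α ^ 2) (hB : B * β = b * α ^ 2) (hC : C * β = c * α ^ 3)
    (hD : D * β = d * α ^ 4) : g7Iso K a b c d A B C D :=
  ⟨.ofLinearMap (scaleMap α β) (scaleMap α⁻¹ β⁻¹)
    (LinearMap.ext fun y => by
      simpa using scaleMap_inv_scaleMap (inv_ne_zero hα) (inv_ne_zero hβ) y)
    (LinearMap.ext (scaleMap_inv_scaleMap hα hβ)), scaleMap_bracket hA hB hC hD⟩

theorem g7Iso_eliminate_c {a : K} (h2 : (2 : K) ≠ 0) (ha : a ≠ 0) (c d : K) :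
    g7Iso K a 0 c d a 0 0 ((4 * a * d - 5 * c ^ 2) / (4 * a)) := by
  have h4 : (4 : K) ≠ 0 := by simpa [show (4 : K) = 2 * 2 by norm_num] using mul_ne_zero h2 h2
  exact g7Iso_shift (c / (2 * a ^ 2)) (by field_simp; ring) (by field_simp; ring)

end

/-- Over a field of characteristic different from 2, with `a ≠ 0`: if `4ad = 5c²` then
`g^7_{a0cd} ≅ g^7_{1000}`; if `4ad ≠ 5c²` and `4ad - 5c²` is a square in `K`, then
`g^7_{a0cd} ≅ g^7_{1001}`. -/
theorem stmt15 (hchar : ringChar K ≠ 2) (a c d : K) (ha : a ≠ 0) :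
    (4 * a * d = 5 * c ^ 2 → g7Iso K a 0 c d 1 0 0 0) ∧
    (4 * a * d ≠ 5 * c ^ 2 → IsSquare (4 * a * d - 5 * c ^ 2) →
      g7Iso K a 0 c d 1 0 0 1) := by
  have h2 : (2 : K) ≠ 0 := Ring.two_ne_zero hchar
  have h4 : (4 : K) ≠ 0 := by simpa [show (4 : K) = 2 * 2 by norm_num] using mul_ne_zero h2 h2
  have hred := g7Iso_eliminate_c h2 ha c d
  refine ⟨fun h => hred.trans ?_, fun hne ⟨w, hw⟩ => hred.trans ?_⟩
  · rw [h, sub_self, zero_div]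
    exact g7Iso_scale one_ne_zero ha (by ring) (by ring) (by ring) (by ring)
  · have hw0 : w ≠ 0 := by rintro rfl; exact hne (sub_eq_zero.mp (by simpa using hw))
    refine g7Iso_scale (α := 2 * a / w) (β := 4 * a ^ 3 / w ^ 2)
      (div_ne_zero (mul_ne_zero h2 ha) hw0)
      (div_ne_zero (mul_ne_zero h4 (pow_ne_zero 3 ha)) (pow_ne_zero 2 hw0))
      (by field_simp; ring) (by ring) (by ring) ?_
    field_simp
    linear_combination -16 * hw
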